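/- For any nonzero 1-vector p ∈ ℝ_m¹ and any u, v ∈ ℂ_m, the Gaussian average over x_0 ∈ ℝ of (exp(−ix_0 p)·u, exp(−ix_0 p)·v) with weight e^{−x_0²}/√π equals e^{|p|²}·(u, v); that is, (1/√π)∫_ℝ (exp(−2ix_0 p)·u, v) e^{−x_0²} dx_0 = e^{|p|²}(u, v). -/

import Mathlib

open MeasureTheory Complex

noncomputable section

/-- The complex Clifford algebra ℂ_m, modeled as coefficient functions in the basis
`{e_A : A ⊆ {1,…,m}}` of products of generators. -/
abbrev CM (m : ℕ) := Finset (Fin m) → ℂ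

/-- Sign in `e_A · e_B = csign A B · e_{A ∆ B}` coming from the relations
`e_i e_j = - e_j e_i` (i ≠ j) and `e_i² = -1`. -/
def csign {m : ℕ} (A B : Finset (Fin m)) : ℂ :=
  (-1 : ℂ) ^ (((A ×ˢ B).filter (fun q => q.2 < q.1)).card + (A ∩ B).card)

/-- Clifford multiplication on ℂ_m. -/
def cmul {m : ℕ} (u v : CM m) : CM m :=
  fun C => ∑ A : Finset (Fin m), csign A (symmDiff A C) * u A * v (symmDiff A C)

/-- The unit 1 of ℂ_m. -/
def cone {m : ℕ} : CM m := fun A => if A = ∅ then 1 else 0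

/-- The generator e_j. -/
def gen {m : ℕ} (j : Fin m) : CM m := fun A => if A = {j} then 1 else 0

/-- The 1-vector Σ p_j e_j. -/
def vec {m : ℕ} (p : Fin m → ℝ) : CM m := ∑ j, (p j : ℂ) • gen j

/-- Powers in ℂ_m. -/
def cpow {m : ℕ} (u : CM m) : ℕ → CM m
  | 0 => cone
  | n + 1 => cmul u (cpow u n)

/-- The exponential in ℂ_m, defined by its power series. -/
def cliffExp {m : ℕ} (u : CM m) : CM m := ∑' n : ℕ, ((n.factorial : ℂ)⁻¹) • cpow u n

/-- The standard Hermitian inner product on ℂ_m: (Σ u_A e_A, Σ v_A e_A) = Σ u_A conj(v_A). -/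
def cinner {m : ℕ} (u v : CM m) : ℂ := ∑ A : Finset (Fin m), u A * (starRingEnd ℂ) (v A)

/-- The associated Hermitian norm on ℂ_m. -/
def cnorm {m : ℕ} (u : CM m) : ℝ := Real.sqrt (∑ A : Finset (Fin m), ‖u A‖ ^ 2)

/-- |p| for p ∈ ℝ^m. -/
def pnorm {m : ℕ} (p : Fin m → ℝ) : ℝ := Real.sqrt (∑ j, (p j) ^ 2)

/-- The projector χ₊(p) = (1/2)(1 + i p/|p|). -/
def chiP {m : ℕ} (p : Fin m → ℝ) : CM m := (2 : ℂ)⁻¹ • (cone + (Complex.I / (pnorm p : ℂ)) • vec p)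

/-- The projector χ₋(p) = (1/2)(1 - i p/|p|). -/
def chiM {m : ℕ} (p : Fin m → ℝ) : CM m := (2 : ℂ)⁻¹ • (cone - (Complex.I / (pnorm p : ℂ)) • vec p)

/-- exp(-itp) := e^{-t|p|} χ₊(p) + e^{t|p|} χ₋(p). -/
def Eexp {m : ℕ} (p : Fin m → ℝ) (t : ℝ) : CM m :=
  (Real.exp (-t * pnorm p) : ℂ) • chiP p + (Real.exp (t * pnorm p) : ℂ) • chiM p

/-- exp(-itp) in the form cosh(t|p|)·1 - i sinh(t|p|)·p/|p|. -/
def Ecs {m : ℕ} (p : Fin m → ℝ) (t : ℝ) : CM m :=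
  (Real.cosh (t * pnorm p) : ℂ) • cone
    - ((Complex.I * (Real.sinh (t * pnorm p) : ℂ)) / (pnorm p : ℂ)) • vec p

/-- The Dirac operator D̲ f = Σ_j e_j ∂f/∂x_j on ℂ_m-valued functions on ℝ^m. -/
def Dop {m : ℕ} (f : (Fin m → ℝ) → CM m) : (Fin m → ℝ) → CM m :=
  fun x => ∑ j, cmul (gen j) (fderiv ℝ f x (Pi.single j 1))

section AuxGaussian
open Finset
variable {m : ℕ}

lemma csign_singleton {m : ℕ} (j : Fin m) (B : Finset (Fin m)) :
    csign {j} B = (-1:ℂ)^((B.filter (fun b => b < j)).card + ({j} ∩ B).card) := by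
  unfold csign
  congr 2
  rw [Finset.singleton_product, Finset.filter_map, Finset.card_map]
  rfl

variable {m : ℕ}

lemma symmDiff_singleton_mem {j : Fin m} {C : Finset (Fin m)} (h : j ∈ C) :
    symmDiff {j} C = C.erase j := by
  ext x
  simp only [Finset.mem_symmDiff, Finset.mem_singleton, Finset.mem_erase]
  constructor
  · rintro (⟨rfl, hx⟩ | ⟨hx, hne⟩)
    · exact absurd h hx
    · exact ⟨fun e => hne (e ▸ rfl), hx⟩
  · rintro ⟨hne, hx⟩
    exact Or.inr ⟨hx, fun e => hne e⟩

lemma symmDiff_singleton_not_mem {j : Fin m} {C : Finset (Fin m)} (h : j ∉ C) :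
    symmDiff {j} C = insert j C := by
  ext x
  simp only [Finset.mem_symmDiff, Finset.mem_singleton, Finset.mem_insert]
  constructor
  · rintro (⟨rfl, _⟩ | ⟨hx, _⟩)
    · exact Or.inl rfl
    · exact Or.inr hx
  · rintro (rfl | hx)
    · exact Or.inl ⟨rfl, h⟩
    · exact Or.inr ⟨hx, fun e => h (e ▸ hx)⟩

def fsgn (j : Fin m) (C : Finset (Fin m)) : ℂ := csign {j} (symmDiff {j} C)
def Ncnt (j : Fin m) (C : Finset (Fin m)) : ℕ := (C.filter (fun b => b < j)).card

lemma fsgn_eq (j : Fin m) (C : Finset (Fin m)) :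
    fsgn j C = (if j ∈ C then 1 else -1) * (-1:ℂ)^(Ncnt j C) := by
  unfold fsgn Ncnt
  by_cases h : j ∈ C
  · rw [symmDiff_singleton_mem h, csign_singleton, if_pos h,
      Finset.filter_erase, Finset.erase_eq_of_notMem (by simp),
      Finset.singleton_inter_of_notMem (Finset.notMem_erase j C)]
    simp
  · rw [symmDiff_singleton_not_mem h, csign_singleton, if_neg h,
      Finset.filter_insert, if_neg (lt_irrefl j),
      Finset.singleton_inter_of_mem (Finset.mem_insert_self j C)]
    simp [pow_succ, mul_comm]

lemma fsgn_sq (j : Fin m) (C : Finset (Fin m)) : fsgn j C * fsgn j C = 1 := by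
  rw [fsgn_eq]
  by_cases h : j ∈ C <;> simp [h, ← pow_add, ← two_mul, pow_mul]

lemma fsgn_conj (j : Fin m) (C : Finset (Fin m)) :
    (starRingEnd ℂ) (fsgn j C) = fsgn j C := by
  rw [fsgn_eq]
  by_cases h : j ∈ C <;> simp [h, map_pow]

lemma Ncnt_symmDiff_self (j : Fin m) (C : Finset (Fin m)) :
    Ncnt j (symmDiff {j} C) = Ncnt j C := by
  unfold Ncnt
  by_cases h : j ∈ C
  · rw [symmDiff_singleton_mem h, Finset.filter_erase,
      Finset.erase_eq_of_notMem (by simp)]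
  · rw [symmDiff_singleton_not_mem h, Finset.filter_insert, if_neg (lt_irrefl j)]

lemma mem_symmDiff_singleton_self (j : Fin m) (C : Finset (Fin m)) :
    j ∈ symmDiff {j} C ↔ j ∉ C := by
  by_cases h : j ∈ C
  · rw [symmDiff_singleton_mem h]; simp [h]
  · rw [symmDiff_singleton_not_mem h]; simp [h]

lemma fsgn_symmDiff (j : Fin m) (C : Finset (Fin m)) :
    fsgn j (symmDiff {j} C) = - fsgn j C := by
  rw [fsgn_eq, fsgn_eq, Ncnt_symmDiff_self]
  by_cases h : j ∈ C <;>
    simp [h, (mem_symmDiff_singleton_self j C)]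

lemma pow_Ncnt_symmDiff_ne {j k : Fin m} (h : j ≠ k) (C : Finset (Fin m)) :
    (-1:ℂ)^(Ncnt k (symmDiff {j} C)) = (if j < k then -1 else 1) * (-1:ℂ)^(Ncnt k C) := by
  unfold Ncnt
  by_cases hm : j ∈ C
  · rw [symmDiff_singleton_mem hm, Finset.filter_erase]
    by_cases hjk : j < k
    · have hjf : j ∈ C.filter (fun b => b < k) := Finset.mem_filter.2 ⟨hm, hjk⟩
      rw [if_pos hjk, ← Finset.card_erase_add_one hjf, pow_succ]
      ring
    · rw [if_neg hjk, Finset.erase_eq_of_notMem (by simp [hjk]), one_mul]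
  · rw [symmDiff_singleton_not_mem hm, Finset.filter_insert]
    by_cases hjk : j < k
    · have hjf : j ∉ C.filter (fun b => b < k) := by simp [hm]
      rw [if_pos hjk, if_pos hjk, Finset.card_insert_of_notMem hjf, pow_succ]
      ring
    · rw [if_neg hjk, if_neg hjk, one_mul]

lemma mem_symmDiff_singleton_ne {j k : Fin m} (h : j ≠ k) (C : Finset (Fin m)) :
    (k ∈ symmDiff {j} C) ↔ k ∈ C := by
  by_cases hm : j ∈ C
  · rw [symmDiff_singleton_mem hm, Finset.mem_erase]
    exact ⟨fun x => x.2, fun x => ⟨fun e => h e.symm, x⟩⟩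
  · rw [symmDiff_singleton_not_mem hm, Finset.mem_insert]
    exact ⟨fun x => x.resolve_left (fun e => h e.symm), Or.inr⟩

lemma fsgn_anticomm {j k : Fin m} (h : j ≠ k) (C : Finset (Fin m)) :
    fsgn j C * fsgn k (symmDiff {j} C) = -(fsgn k C * fsgn j (symmDiff {k} C)) := by
  rw [fsgn_eq, fsgn_eq, fsgn_eq, fsgn_eq, pow_Ncnt_symmDiff_ne h,
    pow_Ncnt_symmDiff_ne h.symm]
  simp only [mem_symmDiff_singleton_ne h, mem_symmDiff_singleton_ne h.symm]
  rcases lt_trichotomy j k with hlt | heq | hgt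
  · rw [if_pos hlt, if_neg (asymm hlt)]; ring
  · exact absurd heq h
  · rw [if_neg (asymm hgt), if_pos hgt]; ring

lemma cmul_gen_apply (j : Fin m) (w : CM m) (C : Finset (Fin m)) :
    cmul (gen j) w C = fsgn j C * w (symmDiff {j} C) := by
  unfold cmul gen fsgn
  rw [Finset.sum_eq_single_of_mem {j} (Finset.mem_univ _)]
  · simp
  · intro A _ hne
    simp [hne]

lemma cmul_cone_left (w : CM m) : cmul cone w = w := by
  funext C
  unfold cmul cone
  rw [Finset.sum_eq_single_of_mem ∅ (Finset.mem_univ _)]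
  · have : symmDiff (∅ : Finset (Fin m)) C = C := bot_symmDiff C
    simp [csign, this]
  · intro A _ hne
    simp [hne]

lemma cmul_smul_left (a : ℂ) (u w : CM m) : cmul (a • u) w = a • cmul u w := by
  funext C
  simp only [cmul, Pi.smul_apply, smul_eq_mul, Finset.mul_sum]
  exact Finset.sum_congr rfl (fun A _ => by ring)

lemma cmul_sub_left (u v w : CM m) : cmul (u - v) w = cmul u w - cmul v w := by
  funext C
  simp only [cmul, Pi.sub_apply, ← Finset.sum_sub_distrib]
  exact Finset.sum_congr rfl (fun A _ => by ring)

lemma cmul_smul_right (a : ℂ) (u w : CM m) : cmul u (a • w) = a • cmul u w := by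
  funext C
  simp only [cmul, Pi.smul_apply, smul_eq_mul, Finset.mul_sum]
  exact Finset.sum_congr rfl (fun A _ => by ring)

lemma cmul_sum_left {ι : Type*} (s : Finset ι) (f : ι → CM m) (w : CM m) :
    cmul (∑ i ∈ s, f i) w = ∑ i ∈ s, cmul (f i) w := by
  funext C
  simp only [cmul, Finset.sum_apply]
  calc ∑ A : Finset (Fin m), csign A (symmDiff A C) * (∑ i ∈ s, f i A) * w (symmDiff A C)
      = ∑ A : Finset (Fin m), ∑ i ∈ s,
          csign A (symmDiff A C) * f i A * w (symmDiff A C) := by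
        refine Finset.sum_congr rfl (fun A _ => ?_)
        rw [Finset.mul_sum, Finset.sum_mul]
    _ = _ := Finset.sum_comm

lemma cmul_sum_right {ι : Type*} (s : Finset ι) (f : ι → CM m) (w : CM m) :
    cmul w (∑ i ∈ s, f i) = ∑ i ∈ s, cmul w (f i) := by
  funext C
  simp only [cmul, Finset.sum_apply]
  calc ∑ A : Finset (Fin m), csign A (symmDiff A C) * w A * (∑ i ∈ s, f i (symmDiff A C))
      = ∑ A : Finset (Fin m), ∑ i ∈ s,
          csign A (symmDiff A C) * w A * f i (symmDiff A C) := by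
        refine Finset.sum_congr rfl (fun A _ => ?_)
        rw [Finset.mul_sum]
    _ = _ := Finset.sum_comm

lemma cmul_vec_left (p : Fin m → ℝ) (u : CM m) :
    cmul (vec p) u = ∑ j, (p j : ℂ) • cmul (gen j) u := by
  rw [vec, cmul_sum_left]
  exact Finset.sum_congr rfl (fun j _ => cmul_smul_left _ _ _)

lemma gen_gen_self (j : Fin m) (w : CM m) : cmul (gen j) (cmul (gen j) w) = -w := by
  funext C
  rw [cmul_gen_apply, cmul_gen_apply, symmDiff_symmDiff_cancel_left, fsgn_symmDiff]
  simp only [Pi.neg_apply]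
  linear_combination (-(w C)) * fsgn_sq j C

lemma gen_anticomm {j k : Fin m} (h : j ≠ k) (w : CM m) :
    cmul (gen j) (cmul (gen k) w) = - cmul (gen k) (cmul (gen j) w) := by
  funext C
  simp only [Pi.neg_apply, cmul_gen_apply]
  have harg : symmDiff {k} (symmDiff {j} C) = symmDiff {j} (symmDiff {k} C) :=
    symmDiff_left_comm {k} {j} C
  rw [harg]
  linear_combination (w (symmDiff {j} (symmDiff {k} C))) * fsgn_anticomm h C

lemma sum_antisymm {ι : Type*} [Fintype ι] [DecidableEq ι] {M : Type*} [AddCommGroup M] [Module ℂ M]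
    (f : ι → ι → M) (hanti : ∀ j k, j ≠ k → f j k + f k j = 0) :
    ∑ j, ∑ k, f j k = ∑ j, f j j := by
  have h2 : (2:ℂ) • (∑ j : ι, ∑ k : ι, f j k) = (2:ℂ) • ∑ j : ι, f j j := by
    have hswap : ∑ j : ι, ∑ k : ι, f j k = ∑ j : ι, ∑ k : ι, f k j := Finset.sum_comm
    have step1 : (2:ℂ) • (∑ j : ι, ∑ k : ι, f j k)
        = ∑ j : ι, ∑ k : ι, (f j k + f k j) := by
      rw [two_smul]
      nth_rewrite 2 [hswap]
      rw [← Finset.sum_add_distrib]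
      exact Finset.sum_congr rfl fun j _ => (Finset.sum_add_distrib).symm
    rw [step1]
    have step2 : ∀ j k : ι, f j k + f k j = if j = k then (2:ℂ) • f j j else 0 := by
      intro j k
      by_cases h : j = k
      · subst h; rw [if_pos rfl, two_smul]
      · rw [if_neg h]; exact hanti j k h
    calc ∑ j : ι, ∑ k : ι, (f j k + f k j)
        = ∑ j : ι, ∑ k : ι, (if j = k then (2:ℂ) • f j j else 0) := by
          exact Finset.sum_congr rfl fun j _ => Finset.sum_congr rfl fun k _ => step2 j k
      _ = ∑ j : ι, (2:ℂ) • f j j := by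
          refine Finset.sum_congr rfl fun j _ => ?_
          rw [Finset.sum_ite_eq, if_pos (Finset.mem_univ j)]
      _ = (2:ℂ) • ∑ j : ι, f j j := (Finset.smul_sum).symm
  exact smul_right_injective M two_ne_zero h2

lemma vec_vec (p : Fin m → ℝ) (u : CM m) :
    cmul (vec p) (cmul (vec p) u) = (-(∑ j, ((p j : ℂ))^2)) • u := by
  rw [cmul_vec_left]
  have : ∀ j : Fin m, cmul (gen j) (cmul (vec p) u)
      = ∑ k, (p k : ℂ) • cmul (gen j) (cmul (gen k) u) := by
    intro j
    rw [cmul_vec_left, cmul_sum_right]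
    exact Finset.sum_congr rfl fun k _ => cmul_smul_right _ _ _
  calc ∑ j, (p j : ℂ) • cmul (gen j) (cmul (vec p) u)
      = ∑ j, ∑ k, ((p j : ℂ) * (p k : ℂ)) • cmul (gen j) (cmul (gen k) u) := by
        refine Finset.sum_congr rfl fun j _ => ?_
        rw [this j, Finset.smul_sum]
        exact Finset.sum_congr rfl fun k _ => (smul_smul _ _ _)
    _ = ∑ j, ((p j : ℂ) * (p j : ℂ)) • cmul (gen j) (cmul (gen j) u) := by
        refine sum_antisymm _ fun j k h => ?_
        rw [gen_anticomm h u]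
        module
    _ = ∑ j, ((p j : ℂ) * (p j : ℂ)) • (-u) := by
        exact Finset.sum_congr rfl fun j _ => by rw [gen_gen_self]
    _ = (-(∑ j, ((p j : ℂ))^2)) • u := by
        rw [← Finset.sum_smul]
        have hsq : ∑ j, (p j : ℂ) * (p j : ℂ) = ∑ j, ((p j : ℂ))^2 :=
          Finset.sum_congr rfl fun j _ => (sq (p j : ℂ)).symm
        rw [hsq, smul_neg, ← neg_smul]

lemma cinner_smul_left (a : ℂ) (u v : CM m) : cinner (a • u) v = a * cinner u v := by
  unfold cinner
  rw [Finset.mul_sum]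
  exact Finset.sum_congr rfl fun A _ => by simp [mul_assoc]

lemma cinner_smul_right (a : ℂ) (u v : CM m) :
    cinner u (a • v) = (starRingEnd ℂ) a * cinner u v := by
  unfold cinner
  rw [Finset.mul_sum]
  exact Finset.sum_congr rfl fun A _ => by simp; ring

lemma cinner_sub_left (u v w : CM m) : cinner (u - v) w = cinner u w - cinner v w := by
  unfold cinner
  rw [← Finset.sum_sub_distrib]
  exact Finset.sum_congr rfl fun A _ => by simp [sub_mul]

lemma cinner_sub_right (u v w : CM m) : cinner u (v - w) = cinner u v - cinner u w := by
  unfold cinner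
  rw [← Finset.sum_sub_distrib]
  exact Finset.sum_congr rfl fun A _ => by simp [mul_sub]

lemma cinner_sum_left {ι : Type*} (s : Finset ι) (f : ι → CM m) (v : CM m) :
    cinner (∑ i ∈ s, f i) v = ∑ i ∈ s, cinner (f i) v := by
  unfold cinner
  rw [Finset.sum_comm]
  exact Finset.sum_congr rfl fun A _ => by rw [Finset.sum_apply, Finset.sum_mul]

lemma cinner_sum_right {ι : Type*} (s : Finset ι) (f : ι → CM m) (v : CM m) :
    cinner v (∑ i ∈ s, f i) = ∑ i ∈ s, cinner v (f i) := by
  unfold cinner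
  rw [Finset.sum_comm]
  exact Finset.sum_congr rfl fun A _ => by rw [Finset.sum_apply, map_sum, Finset.mul_sum]

def sdEquiv (j : Fin m) : Equiv (Finset (Fin m)) (Finset (Fin m)) where
  toFun C := symmDiff {j} C
  invFun C := symmDiff {j} C
  left_inv C := symmDiff_symmDiff_cancel_left {j} C
  right_inv C := symmDiff_symmDiff_cancel_left {j} C

lemma cinner_gen_skew (j : Fin m) (u v : CM m) :
    cinner (cmul (gen j) u) v = - cinner u (cmul (gen j) v) := by
  unfold cinner
  rw [← Finset.sum_neg_distrib]
  rw [← Equiv.sum_comp (sdEquiv j) (fun C => cmul (gen j) u C * (starRingEnd ℂ) (v C))]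
  refine Finset.sum_congr rfl fun C _ => ?_
  simp only [sdEquiv, Equiv.coe_fn_mk, cmul_gen_apply]
  rw [symmDiff_symmDiff_cancel_left, fsgn_symmDiff, map_mul, fsgn_conj]
  ring

lemma cinner_vec_skew (p : Fin m → ℝ) (u v : CM m) :
    cinner (cmul (vec p) u) v = - cinner u (cmul (vec p) v) := by
  rw [cmul_vec_left, cmul_vec_left, cinner_sum_left, cinner_sum_right, ← Finset.sum_neg_distrib]
  refine Finset.sum_congr rfl fun j _ => ?_
  rw [cinner_smul_left, cinner_smul_right, cinner_gen_skew, Complex.conj_ofReal]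
  ring

lemma cinner_vec_vec (p : Fin m → ℝ) (u v : CM m) :
    cinner (cmul (vec p) u) (cmul (vec p) v)
      = ((∑ j, (p j)^2 : ℝ) : ℂ) * cinner u v := by
  have h1 : cinner (cmul (vec p) (cmul (vec p) u)) v
      = - cinner (cmul (vec p) u) (cmul (vec p) v) := cinner_vec_skew p _ v
  have h2 : cinner (cmul (vec p) (cmul (vec p) u)) v
      = (-(∑ j, ((p j : ℂ))^2)) * cinner u v := by
    rw [vec_vec, cinner_smul_left]
  have h3 : ((∑ j, (p j)^2 : ℝ) : ℂ) = ∑ j, ((p j : ℂ))^2 := by push_cast; ring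
  rw [h3]
  linear_combination h1 - h2

lemma cmul_Ecs (p : Fin m → ℝ) (t : ℝ) (u : CM m) :
    cmul (Ecs p t) u = (Real.cosh (t * pnorm p) : ℂ) • u
      - ((Complex.I * (Real.sinh (t * pnorm p) : ℂ)) / (pnorm p : ℂ)) • cmul (vec p) u := by
  rw [Ecs, cmul_sub_left, cmul_smul_left, cmul_smul_left, cmul_cone_left]

lemma cinner_Ecs_left (p : Fin m → ℝ) (t : ℝ) (u v : CM m) :
    cinner (cmul (Ecs p t) u) v
      = (Real.cosh (t * pnorm p) : ℂ) * cinner u v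
        - (Complex.I * (Real.sinh (t * pnorm p) : ℂ) / (pnorm p : ℂ))
            * cinner (cmul (vec p) u) v := by
  rw [cmul_Ecs, cinner_sub_left, cinner_smul_left, cinner_smul_left]

lemma pnorm_pos {p : Fin m → ℝ} (hp : p ≠ 0) : 0 < pnorm p := by
  rw [pnorm]
  apply Real.sqrt_pos.2
  obtain ⟨j, hj⟩ := Function.ne_iff.1 hp
  exact Finset.sum_pos' (fun i _ => sq_nonneg _) ⟨j, Finset.mem_univ j, pow_two_pos_of_ne_zero hj⟩

lemma pnorm_sq {m : ℕ} (p : Fin m → ℝ) : (pnorm p)^2 = ∑ j, (p j)^2 :=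
  Real.sq_sqrt (Finset.sum_nonneg fun j _ => sq_nonneg _)

lemma key_identity (p : Fin m → ℝ) (hp : p ≠ 0) (t : ℝ) (u v : CM m) :
    cinner (cmul (Ecs p t) u) (cmul (Ecs p t) v) = cinner (cmul (Ecs p (2*t)) u) v := by
  have hr : (0:ℝ) < pnorm p := pnorm_pos hp
  have hrne : ((pnorm p : ℝ) : ℂ) ≠ 0 := Complex.ofReal_ne_zero.2 (ne_of_gt hr)
  have hskew : cinner u (cmul (vec p) v) = - cinner (cmul (vec p) u) v := by
    rw [cinner_vec_skew]; ring
  have hPS : ((∑ j, (p j)^2 : ℝ) : ℂ) = ((pnorm p : ℝ):ℂ)^2 := by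
    rw [← pnorm_sq p]; push_cast; ring
  have hcosh2 : (Real.cosh (2*t * pnorm p) : ℂ)
      = (Real.cosh (t * pnorm p):ℂ)^2 + (Real.sinh (t * pnorm p):ℂ)^2 := by
    have h1 := Real.cosh_sq (t * pnorm p)
    have h2 := Real.cosh_two_mul (t * pnorm p)
    have h3 : 2*t*pnorm p = 2*(t*pnorm p) := by ring
    have : Real.cosh (2*t*pnorm p)
        = Real.cosh (t*pnorm p)^2 + Real.sinh (t*pnorm p)^2 := by
      rw [h3, h2]
    exact_mod_cast this
  have hsinh2 : (Real.sinh (2*t * pnorm p) : ℂ)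
      = 2 * (Real.sinh (t * pnorm p):ℂ) * (Real.cosh (t * pnorm p):ℂ) := by
    have h3 : 2*t*pnorm p = 2*(t*pnorm p) := by ring
    have : Real.sinh (2*t*pnorm p)
        = 2 * Real.sinh (t*pnorm p) * Real.cosh (t*pnorm p) := by
      rw [h3, Real.sinh_two_mul]
    exact_mod_cast this
  simp only [cmul_Ecs, cinner_sub_left, cinner_sub_right, cinner_smul_left,
    cinner_smul_right, map_div₀, map_mul, Complex.conj_I, Complex.conj_ofReal,
    cinner_vec_vec]
  rw [hskew, show (2*t)*(pnorm p) = 2*t*pnorm p by ring, hcosh2, hsinh2, hPS]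
  field_simp
  ring_nf
  simp only [Complex.I_sq]
  ring

lemma integrable_exp_shift (r : ℝ) :
    Integrable (fun t : ℝ => Real.exp (-(t - r)^2)) := by
  have h : Integrable (fun x : ℝ => Real.exp (-1 * x^2)) := integrable_exp_neg_mul_sq one_pos
  have h2 := h.comp_sub_right r
  simpa using h2

lemma integrable_exp_shift' (r : ℝ) :
    Integrable (fun t : ℝ => Real.exp (-(t + r)^2)) := by
  have := integrable_exp_shift (-r)
  simpa [sub_neg_eq_add] using this

lemma int_exp_shift (r : ℝ) : ∫ t : ℝ, Real.exp (-(t - r)^2) = Real.sqrt Real.pi := by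
  rw [integral_sub_right_eq_self (fun t : ℝ => Real.exp (-t^2)) r]
  have := integral_gaussian 1
  simpa using this

lemma int_exp_shift' (r : ℝ) : ∫ t : ℝ, Real.exp (-(t + r)^2) = Real.sqrt Real.pi := by
  have := int_exp_shift (-r)
  simpa [sub_neg_eq_add] using this

lemma cosh_gauss_eq (r t : ℝ) : Real.cosh (2*t*r) * Real.exp (-t^2)
    = Real.exp (r^2) * ((Real.exp (-(t-r)^2) + Real.exp (-(t+r)^2))/2) := by
  have e1 : Real.exp (r^2) * Real.exp (-(t-r)^2) = Real.exp (2*t*r) * Real.exp (-t^2) := by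
    rw [← Real.exp_add, ← Real.exp_add]; congr 1; ring
  have e2 : Real.exp (r^2) * Real.exp (-(t+r)^2) = Real.exp (-(2*t*r)) * Real.exp (-t^2) := by
    rw [← Real.exp_add, ← Real.exp_add]; congr 1; ring
  rw [Real.cosh_eq]
  have expand : Real.exp (r^2) * ((Real.exp (-(t-r)^2) + Real.exp (-(t+r)^2))/2)
      = (Real.exp (r^2) * Real.exp (-(t-r)^2) + Real.exp (r^2) * Real.exp (-(t+r)^2))/2 := by
    ring
  rw [expand, e1, e2]
  ring

lemma sinh_gauss_eq (r t : ℝ) : Real.sinh (2*t*r) * Real.exp (-t^2)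
    = Real.exp (r^2) * ((Real.exp (-(t-r)^2) - Real.exp (-(t+r)^2))/2) := by
  have e1 : Real.exp (r^2) * Real.exp (-(t-r)^2) = Real.exp (2*t*r) * Real.exp (-t^2) := by
    rw [← Real.exp_add, ← Real.exp_add]; congr 1; ring
  have e2 : Real.exp (r^2) * Real.exp (-(t+r)^2) = Real.exp (-(2*t*r)) * Real.exp (-t^2) := by
    rw [← Real.exp_add, ← Real.exp_add]; congr 1; ring
  rw [Real.sinh_eq]
  have expand : Real.exp (r^2) * ((Real.exp (-(t-r)^2) - Real.exp (-(t+r)^2))/2)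
      = (Real.exp (r^2) * Real.exp (-(t-r)^2) - Real.exp (r^2) * Real.exp (-(t+r)^2))/2 := by
    ring
  rw [expand, e1, e2]
  ring

lemma integrable_cosh_gauss (r : ℝ) :
    Integrable (fun t : ℝ => Real.cosh (2*t*r) * Real.exp (-t^2)) := by
  have : Integrable (fun t : ℝ =>
      Real.exp (r^2) * ((Real.exp (-(t-r)^2) + Real.exp (-(t+r)^2))/2)) :=
    (((integrable_exp_shift r).add (integrable_exp_shift' r)).div_const 2).const_mul _
  exact this.congr (by filter_upwards with t using (cosh_gauss_eq r t).symm)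

lemma integrable_sinh_gauss (r : ℝ) :
    Integrable (fun t : ℝ => Real.sinh (2*t*r) * Real.exp (-t^2)) := by
  have : Integrable (fun t : ℝ =>
      Real.exp (r^2) * ((Real.exp (-(t-r)^2) - Real.exp (-(t+r)^2))/2)) :=
    (((integrable_exp_shift r).sub (integrable_exp_shift' r)).div_const 2).const_mul _
  exact this.congr (by filter_upwards with t using (sinh_gauss_eq r t).symm)

lemma int_cosh_gauss (r : ℝ) :
    ∫ t : ℝ, Real.cosh (2*t*r) * Real.exp (-t^2)
      = Real.sqrt Real.pi * Real.exp (r^2) := by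
  simp_rw [cosh_gauss_eq r]
  rw [MeasureTheory.integral_const_mul, integral_div,
    integral_add (integrable_exp_shift r) (integrable_exp_shift' r),
    int_exp_shift, int_exp_shift']
  ring

lemma int_sinh_gauss (r : ℝ) :
    ∫ t : ℝ, Real.sinh (2*t*r) * Real.exp (-t^2) = 0 := by
  set f := fun t : ℝ => Real.sinh (2*t*r) * Real.exp (-t^2) with hf
  have hodd : ∀ t : ℝ, f (-t) = - f t := by
    intro t
    simp only [hf]
    rw [show 2*(-t)*r = -(2*t*r) by ring, Real.sinh_neg, neg_sq]
    ring
  have h1 : ∫ x : ℝ, f (-x) = ∫ x : ℝ, f x := integral_neg_eq_self f volume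
  have h2 : ∫ x : ℝ, f (-x) = - ∫ x : ℝ, f x := by
    simp_rw [hodd]
    exact integral_neg f
  linarith [h1.symm.trans h2]

lemma main_integral (p : Fin m → ℝ) (hp : p ≠ 0) (u v : CM m) :
    ∫ t : ℝ, cinner (cmul (Ecs p (2*t)) u) v * Real.exp (-t^2)
      = ((Real.sqrt Real.pi : ℝ) : ℂ) * (Real.exp (∑ j, (p j)^2) : ℂ) * cinner u v := by
  have hr : (0:ℝ) < pnorm p := pnorm_pos hp
  have hfun : ∀ t : ℝ, cinner (cmul (Ecs p (2*t)) u) v * (Real.exp (-t^2) : ℂ)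
      = cinner u v * ((Real.cosh (2*t*pnorm p) * Real.exp (-t^2) : ℝ) : ℂ)
        - (Complex.I * cinner (cmul (vec p) u) v / ((pnorm p : ℝ):ℂ))
            * ((Real.sinh (2*t*pnorm p) * Real.exp (-t^2) : ℝ) : ℂ) := by
    intro t
    rw [cinner_Ecs_left, show (2*t)*(pnorm p) = 2*t*pnorm p by ring]
    push_cast
    ring
  simp_rw [hfun]
  have hI1 : Integrable (fun t : ℝ => cinner u v
      * ((Real.cosh (2*t*pnorm p) * Real.exp (-t^2) : ℝ) : ℂ)) volume :=
    (Integrable.ofReal (𝕜 := ℂ) (integrable_cosh_gauss (pnorm p))).const_mul _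
  have hI2 : Integrable (fun t : ℝ => (Complex.I * cinner (cmul (vec p) u) v / ((pnorm p : ℝ):ℂ))
      * ((Real.sinh (2*t*pnorm p) * Real.exp (-t^2) : ℝ) : ℂ)) volume :=
    (Integrable.ofReal (𝕜 := ℂ) (integrable_sinh_gauss (pnorm p))).const_mul _
  rw [integral_sub hI1 hI2, MeasureTheory.integral_const_mul, MeasureTheory.integral_const_mul]
  have hc : ∫ t : ℝ, ((Real.cosh (2*t*pnorm p) * Real.exp (-t^2) : ℝ) : ℂ)
      = ((Real.sqrt Real.pi * Real.exp ((pnorm p)^2) : ℝ) : ℂ) := by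
    rw [← int_cosh_gauss (pnorm p)]
    exact integral_ofReal
  have hs : ∫ t : ℝ, ((Real.sinh (2*t*pnorm p) * Real.exp (-t^2) : ℝ) : ℂ) = 0 := by
    have : ((0:ℝ):ℂ) = 0 := by norm_num
    rw [← this, ← int_sinh_gauss (pnorm p)]
    exact integral_ofReal
  rw [hc, hs, pnorm_sq]
  push_cast
  ring


end AuxGaussian

/-- for a nonzero 1-vector p and u, v ∈ ℂ_m, the Gaussian average
over x₀ of (exp(−ix₀p)u, exp(−ix₀p)v) with weight e^{−x₀²}/√π equals
e^{|p|²}(u,v); that is, (1/√π)∫(exp(−2ix₀p)u, v)e^{−x₀²}dx₀ = e^{|p|²}(u,v). -/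
theorem gaussian_average_exp (m : ℕ) (p : Fin m → ℝ) (hp : p ≠ 0) (u v : CM m) :
    (((Real.sqrt Real.pi : ℝ) : ℂ)⁻¹ *
        ∫ t : ℝ, cinner (cmul (Ecs p t) u) (cmul (Ecs p t) v) * Real.exp (-t^2)
      = (Real.exp (∑ j, (p j)^2) : ℂ) * cinner u v) ∧
    ((Real.sqrt Real.pi : ℂ)⁻¹ *
        ∫ t : ℝ, cinner (cmul (Ecs p (2 * t)) u) v * Real.exp (-t^2)
      = (Real.exp (∑ j, (p j)^2) : ℂ) * cinner u v) := by

  have hsp : ((Real.sqrt Real.pi : ℝ) : ℂ) ≠ 0 :=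
    Complex.ofReal_ne_zero.2 (ne_of_gt (Real.sqrt_pos.2 Real.pi_pos))
  have hmain := main_integral p hp u v
  constructor
  · have : (∫ t : ℝ, cinner (cmul (Ecs p t) u) (cmul (Ecs p t) v) * (Real.exp (-t^2) : ℂ))
        = ∫ t : ℝ, cinner (cmul (Ecs p (2*t)) u) v * (Real.exp (-t^2) : ℂ) := by
      refine congrArg _ (funext fun t => ?_)
      rw [key_identity p hp]
    rw [this, hmain]
    field_simp
  · rw [hmain]
    field_simp


end
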